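/- Let M = (M_i)_{i∈I} be a POVM on ℂ^d with every M_i ≠ 0, and let ρ, σ be quantum states with (1/2)‖ρ − σ‖₁ ≤ ε ≤ 1. Then |S_M(ρ) − S_M(σ)| ≤ h(ε) + ε·log|I| + ε·max_i |log tr(M_i)|. -/

import Mathlib

open scoped BigOperators ComplexOrder Classical

noncomputable section

/-- Shannon entropy of a finitely supported distribution, with `0 log 0 = 0`. -/
def shannonEntropy {ι : Type*} [Fintype ι] (p : ι → ℝ) : ℝ :=
  -∑ i, p i * Real.log (p i)

/-- A quantum state: positive semidefinite with unit trace. -/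
def IsState {n : Type*} [Fintype n] (ρ : Matrix n n ℂ) : Prop :=
  ρ.PosSemidef ∧ ρ.trace = 1

/-- A POVM: positive semidefinite elements summing to the identity. -/
def IsPOVM {ι n : Type*} [Fintype ι] [Fintype n] [DecidableEq n]
    (M : ι → Matrix n n ℂ) : Prop :=
  (∀ i, (M i).PosSemidef) ∧ ∑ i, M i = 1

/-- Observational entropy `S_M(ρ) = -∑ p_i log (p_i / V_i)`. -/
def obsEntropy {ι n : Type*} [Fintype ι] [Fintype n]
    (M : ι → Matrix n n ℂ) (ρ : Matrix n n ℂ) : ℝ :=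
  -∑ i, ((M i * ρ).trace.re * Real.log ((M i * ρ).trace.re / (M i).trace.re))

/-- The function `g(x) = -x log x + (1+x) log(1+x)`. -/
def gFun (x : ℝ) : ℝ := -(x * Real.log x) + (1 + x) * Real.log (1 + x)

/-- Trace norm of a square complex matrix. -/
def traceNorm {n : Type*} [Fintype n] [DecidableEq n] (X : Matrix n n ℂ) : ℝ :=
  (((Matrix.posSemidef_conjTranspose_mul_self X).1.eigenvectorUnitary : Matrix n n ℂ) *
    Matrix.diagonal (fun i => ((Real.sqrt ((Matrix.posSemidef_conjTranspose_mul_self X).1.eigenvalues i) : ℝ) : ℂ)) *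
    (star (Matrix.posSemidef_conjTranspose_mul_self X).1.eigenvectorUnitary : Matrix n n ℂ)).trace.re

/-- Matrix logarithm of a Hermitian matrix via the spectral decomposition,
with the convention `log 0 = 0` on the kernel; junk value `0` on non-Hermitian input. -/
def matLog {n : Type*} [Fintype n] [DecidableEq n] (A : Matrix n n ℂ) : Matrix n n ℂ :=
  if hA : A.IsHermitian then
    (hA.eigenvectorUnitary : Matrix n n ℂ) *
      Matrix.diagonal (fun i => (Real.log (hA.eigenvalues i) : ℂ)) *
      (star (hA.eigenvectorUnitary : Matrix n n ℂ))
  else 0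

/-- Von Neumann entropy `S(ρ) = -tr(ρ log ρ)`. -/
def vnEntropy {n : Type*} [Fintype n] [DecidableEq n] (ρ : Matrix n n ℂ) : ℝ :=
  -((ρ * matLog ρ).trace.re)

/-- Quantum relative entropy, as an extended real number: `tr(μ (log μ - log ν))` when
`supp μ ⊆ supp ν` (both Hermitian), and `+∞` otherwise. -/
def qRelEntropy {n : Type*} [Fintype n] [DecidableEq n] (μ ν : Matrix n n ℂ) : EReal :=
  if μ.IsHermitian ∧ ν.IsHermitian ∧
      LinearMap.range (Matrix.toLin' μ) ≤ LinearMap.range (Matrix.toLin' ν) then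
    (((μ * (matLog μ - matLog ν)).trace.re : ℝ) : EReal)
  else ⊤

/-- Real-valued quantum relative entropy `tr(μ (log μ - log ν))` (meaningful when
`supp μ ⊆ supp ν`). -/
def qRelEntropyR {n : Type*} [Fintype n] [DecidableEq n] (μ ν : Matrix n n ℂ) : ℝ :=
  (μ * (matLog μ - matLog ν)).trace.re


/-- The binary Shannon entropy `h(x) = -x log x - (1-x) log (1-x)`. -/
def hFun (x : ℝ) : ℝ := -(x * Real.log x) - (1 - x) * Real.log (1 - x)

/-!
Measuring with `M` turns `ρ, σ` into probability vectors `p, q` with `p i, q i ≤ V i = tr M_i`,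
and `S_M` into the coarse-grained entropy `-∑ p i log (p i / V i)`. Since `|Δ| = Δ⁺ + Δ⁻`, the
measurement does not increase the trace distance, so the total variation distance `δ` of `p, q`
is at most `ε`. Split `p = min p q + (p - q)⁺`: with `η x = -x log x`, the excess, of mass `δ`,
costs at most `η(δ) + δ log |I| + δ max log V_i`, and the overlap, of mass `1 - δ`, at most `η(1 - δ)` by the
log-sum inequality together with `q ≤ V`. This bounds `|S_M ρ - S_M σ|` by `h(δ) + δ C`, with
`C = log |I| + max |log V_i|`. Since `0 ≤ S_M ≤ C`, the difference is also at most `C`, the value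
of that bound at `δ = 1`, and the concavity of `x ↦ h(x) + x C` carries the bound from `δ` to every
`ε ∈ [δ, 1]`.
-/

open Real Finset

theorem Real.mul_log_div_eq (x : ℝ) {v : ℝ} (hv : v ≠ 0) :
    x * log (x / v) = x * log x - x * log v := by
  rcases eq_or_ne x 0 with rfl | hx
  · simp
  · rw [log_div hx hv]; ring

theorem Real.negMulLog_add_le {a b : ℝ} (ha : 0 ≤ a) (hb : 0 ≤ b) :
    negMulLog (a + b) ≤ negMulLog a + negMulLog b := by
  rcases ha.eq_or_lt with rfl | ha'
  · simp
  rcases hb.eq_or_lt with rfl | hb'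
  · simp
  have hla : log a ≤ log (a + b) := log_le_log ha' (by linarith)
  have hlb : log b ≤ log (a + b) := log_le_log hb' (by linarith)
  simp only [negMulLog, neg_mul]
  nlinarith

theorem Real.sum_negMulLog_le {ι : Type*} (s : Finset ι) {a : ι → ℝ} (ha : ∀ i ∈ s, 0 ≤ a i) :
    ∑ i ∈ s, negMulLog (a i) ≤ negMulLog (∑ i ∈ s, a i) + (∑ i ∈ s, a i) * log #s := by
  rcases s.eq_empty_or_nonempty with rfl | hs
  · simp
  have hk : (0 : ℝ) < #s := by exact_mod_cast hs.card_pos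
  have hJ := concaveOn_negMulLog.le_map_sum (t := s) (w := fun _ => (#s : ℝ)⁻¹) (p := a)
    (fun _ _ => by positivity) (by simp [hk.ne']) (fun i hi => Set.mem_Ici.mpr (ha i hi))
  simp only [smul_eq_mul, ← mul_sum] at hJ
  calc ∑ i ∈ s, negMulLog (a i) = #s * ((#s : ℝ)⁻¹ * ∑ i ∈ s, negMulLog (a i)) := by
        field_simp
    _ ≤ #s * negMulLog ((#s : ℝ)⁻¹ * ∑ i ∈ s, a i) := by gcongr
    _ = negMulLog (∑ i ∈ s, a i) + (∑ i ∈ s, a i) * log #s := by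
        rw [mul_comm, negMulLog_mul, negMulLog, log_inv]
        field_simp
        ring

/-- The log-sum inequality. -/
theorem Real.sum_mul_log_div_le {ι : Type*} (s : Finset ι) {p q : ι → ℝ}
    (hp : ∀ i ∈ s, 0 ≤ p i) (hq : ∀ i ∈ s, 0 ≤ q i) (hpq : ∀ i ∈ s, 0 < p i → 0 < q i) :
    ∑ i ∈ s, p i * log (q i / p i) ≤ (∑ i ∈ s, p i) * log ((∑ i ∈ s, q i) / ∑ i ∈ s, p i) := by
  set P := ∑ i ∈ s, p i
  set Q := ∑ i ∈ s, q i
  rcases (sum_nonneg hp).eq_or_lt with hP | hP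
  · have hzero : ∀ i ∈ s, p i = 0 := (sum_eq_zero_iff_of_nonneg hp).mp hP.symm
    rw [show P = 0 from hP.symm, zero_mul]
    exact (sum_eq_zero fun i hi => by simp [hzero i hi]).le
  obtain ⟨j, hj, hpj⟩ : ∃ j ∈ s, 0 < p j := by
    by_contra! h
    exact hP.not_ge (sum_nonpos h)
  have hQ : 0 < Q := sum_pos' hq ⟨j, hj, hpq j hj hpj⟩
  -- termwise `log x ≤ x - 1` at `x = (q i / p i) / (Q / P)`
  have hterm : ∀ i ∈ s, p i * log (q i / p i) ≤ p i * log (Q / P) + (q i * (P / Q) - p i) := by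
    intro i hi
    rcases (hp i hi).eq_or_lt with hpi | hpi
    · rw [← hpi]
      simp only [zero_mul, zero_add, sub_zero]
      exact mul_nonneg (hq i hi) (div_nonneg hP.le hQ.le)
    have hqi := hpq i hi hpi
    have hlog := log_le_sub_one_of_pos (x := (q i / p i) / (Q / P)) (by positivity)
    rw [log_div (by positivity) (by positivity)] at hlog
    have hrhs : p i * ((q i / p i) / (Q / P) - 1) = q i * (P / Q) - p i := by field_simp
    nlinarith
  calc ∑ i ∈ s, p i * log (q i / p i)
      ≤ ∑ i ∈ s, (p i * log (Q / P) + (q i * (P / Q) - p i)) := sum_le_sum hterm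
    _ = P * log (Q / P) := by
        rw [sum_add_distrib, sum_sub_distrib, ← sum_mul, ← sum_mul]
        field_simp
        ring

section CoarseEntropy

variable {ι : Type*} [Fintype ι]

def coarseEntropy (p V : ι → ℝ) : ℝ :=
  -∑ i, p i * log (p i / V i)

def tvDist (p q : ι → ℝ) : ℝ :=
  (∑ i, |p i - q i|) / 2

theorem tvDist_comm (p q : ι → ℝ) : tvDist p q = tvDist q p := by
  simp only [tvDist, abs_sub_comm]

theorem coarseEntropy_eq_sum {p V : ι → ℝ} (hV : ∀ i, V i ≠ 0) :
    coarseEntropy p V = ∑ i, (negMulLog (p i) + p i * log (V i)) := by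
  simp only [coarseEntropy, ← sum_neg_distrib, mul_log_div_eq _ (hV _), negMulLog]
  ring_nf

theorem coarseEntropy_nonneg {p V : ι → ℝ} (hp : ∀ i, 0 ≤ p i) (hpV : ∀ i, p i ≤ V i) :
    0 ≤ coarseEntropy p V := by
  refine neg_nonneg.mpr (sum_nonpos fun i _ => mul_nonpos_of_nonneg_of_nonpos (hp i) ?_)
  exact log_nonpos (div_nonneg (hp i) ((hp i).trans (hpV i)))
    (div_le_one_of_le₀ (hpV i) ((hp i).trans (hpV i)))

theorem coarseEntropy_le {p V : ι → ℝ} {L : ℝ} (hp : ∀ i, 0 ≤ p i) (hp1 : ∑ i, p i = 1)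
    (hV : ∀ i, 0 < V i) (hL : ∀ i, log (V i) ≤ L) :
    coarseEntropy p V ≤ log (Fintype.card ι) + L := by
  have hH := sum_negMulLog_le univ fun i _ => hp i
  rw [hp1, negMulLog_one, one_mul, zero_add, card_univ] at hH
  have hLV : ∑ i, p i * log (V i) ≤ L := by
    calc ∑ i, p i * log (V i) ≤ ∑ i, p i * L :=
          sum_le_sum fun i _ => mul_le_mul_of_nonneg_left (hL i) (hp i)
      _ = L := by rw [← sum_mul, hp1, one_mul]
  rw [coarseEntropy_eq_sum fun i => (hV i).ne', sum_add_distrib]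
  linarith

theorem negMulLog_sub_negMulLog_add_mul_log_le {p q V L : ℝ} (hp : 0 ≤ p) (hq : 0 ≤ q)
    (hqV : q ≤ V) (hL : log V ≤ L) :
    negMulLog p - negMulLog q + (p - q) * log V ≤
      negMulLog (max (p - q) 0) + max (p - q) 0 * L + min p q * log (q / min p q) := by
  rcases lt_or_ge q p with hqp | hpq
  · rw [max_eq_left (sub_nonneg.mpr hqp.le), min_eq_right hqp.le]
    have hsub := negMulLog_add_le hq (sub_nonneg.mpr hqp.le)
    rw [add_sub_cancel] at hsub
    have hqq : q * log (q / q) = 0 := by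
      rcases hq.eq_or_lt with rfl | hq'
      · simp
      · rw [div_self hq'.ne', log_one, mul_zero]
    have hlogV : (p - q) * log V ≤ (p - q) * L := by gcongr
    linarith
  · rw [max_eq_right (sub_nonpos.mpr hpq), min_eq_left hpq, negMulLog_zero, zero_mul]
    rcases hp.eq_or_lt with rfl | hp'
    · rcases hq.eq_or_lt with rfl | hq'
      · simp
      have hlogV : log q ≤ log V := log_le_log hq' hqV
      simp only [negMulLog, zero_sub, zero_mul]
      nlinarith
    have hq' : 0 < q := hp'.trans_le hpq
    have hlogV : (q - p) * log q ≤ (q - p) * log V := by gcongr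
    rw [log_div hq'.ne' hp'.ne']
    simp only [negMulLog]
    nlinarith

theorem sum_max_sub_zero_eq_tvDist {p q : ι → ℝ} (hp1 : ∑ i, p i = 1) (hq1 : ∑ i, q i = 1) :
    ∑ i, max (p i - q i) 0 = tvDist p q := by
  have h : ∀ i, max (p i - q i) 0 = ((p i - q i) + |p i - q i|) / 2 := fun i => by
    rcases le_total 0 (p i - q i) with h | h
    · rw [max_eq_left h, abs_of_nonneg h]; ring
    · rw [max_eq_right h, abs_of_nonpos h]; ring
  rw [tvDist, sum_congr rfl fun i _ => h i, ← sum_div, sum_add_distrib, sum_sub_distrib, hp1, hq1,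
    sub_self, zero_add]

theorem coarseEntropy_sub_le {p q V : ι → ℝ} {L : ℝ} (hp : ∀ i, 0 ≤ p i) (hq : ∀ i, 0 ≤ q i)
    (hp1 : ∑ i, p i = 1) (hq1 : ∑ i, q i = 1) (hV : ∀ i, 0 < V i) (hqV : ∀ i, q i ≤ V i)
    (hL : ∀ i, log (V i) ≤ L) :
    coarseEntropy p V - coarseEntropy q V ≤
      binEntropy (tvDist p q) + tvDist p q * (log (Fintype.card ι) + L) := by
  set δ := tvDist p q
  have hexcess : ∑ i, max (p i - q i) 0 = δ := sum_max_sub_zero_eq_tvDist hp1 hq1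
  have hoverlap : ∑ i, min (p i) (q i) = 1 - δ := by
    rw [← hp1, ← hexcess, ← sum_sub_distrib]
    exact sum_congr rfl fun i _ => by
      rcases le_total (p i) (q i) with h | h
      · rw [min_eq_left h, max_eq_right (sub_nonpos.mpr h), sub_zero]
      · rw [min_eq_right h, max_eq_left (sub_nonneg.mpr h)]; ring
  have hentropy := sum_negMulLog_le univ fun i _ => le_max_right (p i - q i) 0
  rw [hexcess, card_univ] at hentropy
  have hlogsum := sum_mul_log_div_le univ (p := fun i => min (p i) (q i)) (q := q)
    (fun i _ => le_min (hp i) (hq i)) (fun i _ => hq i)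
    (fun i _ h => h.trans_le (min_le_right _ _))
  rw [hoverlap, hq1] at hlogsum
  calc coarseEntropy p V - coarseEntropy q V
      = ∑ i, (negMulLog (p i) - negMulLog (q i) + (p i - q i) * log (V i)) := by
        rw [coarseEntropy_eq_sum fun i => (hV i).ne', coarseEntropy_eq_sum fun i => (hV i).ne',
          ← sum_sub_distrib]
        exact sum_congr rfl fun i _ => by ring
    _ ≤ ∑ i, (negMulLog (max (p i - q i) 0) + max (p i - q i) 0 * L
          + min (p i) (q i) * log (q i / min (p i) (q i))) :=
        sum_le_sum fun i _ => negMulLog_sub_negMulLog_add_mul_log_le (hp i) (hq i) (hqV i) (hL i)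
    _ ≤ (negMulLog δ + δ * log (Fintype.card ι)) + δ * L + (1 - δ) * log (1 / (1 - δ)) := by
        rw [sum_add_distrib, sum_add_distrib, ← sum_mul, hexcess]
        linarith
    _ = binEntropy δ + δ * (log (Fintype.card ι) + L) := by
        rw [binEntropy_eq_negMulLog_add_negMulLog_one_sub, negMulLog, negMulLog, one_div, log_inv]
        ring

theorem abs_coarseEntropy_sub_le {p q V : ι → ℝ} {L ε : ℝ} (hp : ∀ i, 0 ≤ p i)
    (hq : ∀ i, 0 ≤ q i) (hp1 : ∑ i, p i = 1) (hq1 : ∑ i, q i = 1) (hV : ∀ i, 0 < V i)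
    (hpV : ∀ i, p i ≤ V i) (hqV : ∀ i, q i ≤ V i) (hL : ∀ i, log (V i) ≤ L)
    (hε : tvDist p q ≤ ε) (hε1 : ε ≤ 1) :
    |coarseEntropy p V - coarseEntropy q V| ≤ binEntropy ε + ε * (log (Fintype.card ι) + L) := by
  set δ := tvDist p q
  set C := log (Fintype.card ι) + L
  have hle₁ := coarseEntropy_sub_le hp hq hp1 hq1 hV hqV hL
  have hle₂ := coarseEntropy_sub_le hq hp hq1 hp1 hV hpV hL
  rw [tvDist_comm] at hle₂
  have hleC : |coarseEntropy p V - coarseEntropy q V| ≤ C :=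
    abs_sub_le_of_nonneg_of_le (coarseEntropy_nonneg hp hpV) (coarseEntropy_le hp hp1 hV hL)
      (coarseEntropy_nonneg hq hqV) (coarseEntropy_le hq hq1 hV hL)
  have hconc : ConcaveOn ℝ (Set.Icc 0 1) fun x => binEntropy x + x * C :=
    strictConcave_binEntropy.concaveOn.add ((LinearMap.mulRight ℝ C).concaveOn (convex_Icc 0 1))
  have hδ0 : 0 ≤ δ := by unfold δ tvDist; positivity
  have hmin := hconc.min_le_of_mem_Icc ⟨hδ0, hε.trans hε1⟩ ⟨zero_le_one, le_rfl⟩ ⟨hε, hε1⟩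
  simp only [binEntropy_one, one_mul, zero_add] at hmin
  exact (le_min (abs_sub_le_iff.mpr ⟨hle₁, hle₂⟩) hleC).trans hmin

end CoarseEntropy

theorem hFun_eq_binEntropy : hFun = binEntropy := by
  ext x
  rw [hFun, binEntropy_eq_negMulLog_add_negMulLog_one_sub, negMulLog, negMulLog]
  ring

section Matrices

open Matrix
open scoped MatrixOrder

variable {n : Type*} [Fintype n]

theorem Matrix.PosSemidef.re_trace_pos {A : Matrix n n ℂ} (hA : A.PosSemidef) (h : A ≠ 0) :
    0 < A.trace.re := by
  refine (Complex.nonneg_iff.mp hA.trace_nonneg).1.lt_of_ne fun h0 => h ?_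
  exact hA.trace_eq_zero_iff.mp (Complex.ext h0.symm (Complex.nonneg_iff.mp hA.trace_nonneg).2.symm)

theorem obsEntropy_eq_coarseEntropy {ι : Type*} [Fintype ι] (M : ι → Matrix n n ℂ)
    (ρ : Matrix n n ℂ) :
    obsEntropy M ρ = coarseEntropy (fun i => (M i * ρ).trace.re) (fun i => (M i).trace.re) :=
  rfl

variable [DecidableEq n]

theorem Matrix.PosSemidef.trace_mul_nonneg {A B : Matrix n n ℂ} (hA : A.PosSemidef)
    (hB : B.PosSemidef) : 0 ≤ (A * B).trace := by
  have hsqrt : (CFC.sqrt B).IsHermitian := (nonneg_iff_posSemidef.mp (CFC.sqrt_nonneg B)).1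
  calc 0 ≤ (CFC.sqrt B * A * CFC.sqrt B).trace := by
        simpa [hsqrt.eq] using (hA.conjTranspose_mul_mul_same (CFC.sqrt B)).trace_nonneg
    _ = (A * B).trace := by
        rw [trace_mul_cycle, trace_mul_comm,
          CFC.sqrt_mul_sqrt_self B (nonneg_iff_posSemidef.mpr hB)]

theorem IsState.le_one {ρ : Matrix n n ℂ} (hρ : IsState ρ) : ρ ≤ 1 := by
  have hsum : ∑ k, hρ.1.1.eigenvalues k = 1 := by
    simpa using congrArg Complex.re (hρ.1.1.trace_eq_sum_eigenvalues.symm.trans hρ.2)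
  rw [← map_one (algebraMap ℝ (Matrix n n ℂ))]
  refine le_algebraMap_of_spectrum_le (fun x hx => ?_) hρ.1.1.isSelfAdjoint
  obtain ⟨k, rfl⟩ := hρ.1.1.spectrum_real_eq_range_eigenvalues ▸ hx
  exact hsum ▸ Finset.single_le_sum (fun j _ => hρ.1.eigenvalues_nonneg j) (Finset.mem_univ k)

theorem traceNorm_eq_re_trace_abs (X : Matrix n n ℂ) : traceNorm X = (CFC.abs X).trace.re := by
  have hX := posSemidef_conjTranspose_mul_self X
  rw [CFC.abs, CFC.sqrt_eq_cfc, cfc_nnreal_eq_real _ (star X * X), star_eq_conjTranspose,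
    hX.1.cfc_eq, traceNorm]
  simp [IsHermitian.cfc, Function.comp_def, max_eq_left (hX.eigenvalues_nonneg _)]

section POVM

variable {ι : Type*} [Fintype ι] {M : ι → Matrix n n ℂ}

theorem IsPOVM.sum_re_trace_mul (hM : IsPOVM M) (X : Matrix n n ℂ) :
    ∑ i, (M i * X).trace.re = X.trace.re := by
  rw [← Complex.re_sum, ← trace_sum, ← Finset.sum_mul, hM.2, one_mul]

theorem IsPOVM.re_trace_mul_nonneg (hM : IsPOVM M) (i : ι) {X : Matrix n n ℂ}
    (hX : X.PosSemidef) : 0 ≤ (M i * X).trace.re :=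
  (Complex.nonneg_iff.mp ((hM.1 i).trace_mul_nonneg hX)).1

theorem IsPOVM.re_trace_mul_le (hM : IsPOVM M) (i : ι) {ρ : Matrix n n ℂ} (hρ : IsState ρ) :
    (M i * ρ).trace.re ≤ (M i).trace.re := by
  have h := hM.re_trace_mul_nonneg i (nonneg_iff_posSemidef.mp (sub_nonneg.mpr hρ.le_one))
  rwa [mul_sub, mul_one, trace_sub, Complex.sub_re, sub_nonneg] at h

theorem IsPOVM.sum_abs_re_trace_mul_le_traceNorm (hM : IsPOVM M) {Δ : Matrix n n ℂ}
    (hΔ : Δ.IsHermitian) : ∑ i, |(M i * Δ).trace.re| ≤ traceNorm Δ := by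
  rw [traceNorm_eq_re_trace_abs, ← CFC.posPart_add_negPart Δ hΔ.isSelfAdjoint,
    ← hM.sum_re_trace_mul]
  refine Finset.sum_le_sum fun i _ => ?_
  have hpos := hM.re_trace_mul_nonneg i (nonneg_iff_posSemidef.mp (CFC.posPart_nonneg Δ))
  have hneg := hM.re_trace_mul_nonneg i (nonneg_iff_posSemidef.mp (CFC.negPart_nonneg Δ))
  have hsplit : (M i * Δ).trace.re = (M i * Δ⁺).trace.re - (M i * Δ⁻).trace.re := by
    conv_lhs => rw [← CFC.posPart_sub_negPart Δ hΔ.isSelfAdjoint]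
    rw [mul_sub, trace_sub, Complex.sub_re]
  rw [hsplit, mul_add, trace_add, Complex.add_re]
  exact abs_sub_le_of_nonneg_of_le hpos (le_add_of_nonneg_right hneg) hneg
    (le_add_of_nonneg_left hpos)

end POVM

end Matrices

theorem obsEntropy_naive_continuity {d : ℕ} {ι : Type*} [Fintype ι] [Nonempty ι]
    (M : ι → Matrix (Fin d) (Fin d) ℂ) (hM : IsPOVM M) (hM0 : ∀ i, M i ≠ 0)
    (ρ σ : Matrix (Fin d) (Fin d) ℂ) (hρ : IsState ρ) (hσ : IsState σ)
    (ε : ℝ) (hε1 : ε ≤ 1) (hε : (1/2) * traceNorm (ρ - σ) ≤ ε) :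
    |obsEntropy M ρ - obsEntropy M σ| ≤ hFun ε + ε * Real.log (Fintype.card ι)
      + ε * (Finset.univ.sup' Finset.univ_nonempty fun i => |Real.log ((M i).trace.re)|) := by
  set L := Finset.univ.sup' Finset.univ_nonempty fun i => |Real.log ((M i).trace.re)|
  have hL : ∀ i, log (M i).trace.re ≤ L := fun i =>
    (le_abs_self _).trans (le_sup' (fun j => |log (M j).trace.re|) (mem_univ i))
  have hV : ∀ i, 0 < (M i).trace.re := fun i => (hM.1 i).re_trace_pos (hM0 i)
  have hsum : ∀ {τ : Matrix (Fin d) (Fin d) ℂ}, IsState τ → ∑ i, (M i * τ).trace.re = 1 :=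
    fun hτ => by rw [hM.sum_re_trace_mul, hτ.2, Complex.one_re]
  have htv : tvDist (fun i => (M i * ρ).trace.re) (fun i => (M i * σ).trace.re) ≤ ε := by
    refine le_trans ?_ hε
    simp only [tvDist, ← Complex.sub_re, ← Matrix.trace_sub, ← Matrix.mul_sub]
    linarith [hM.sum_abs_re_trace_mul_le_traceNorm (hρ.1.1.sub hσ.1.1)]
  have key := abs_coarseEntropy_sub_le (fun i => hM.re_trace_mul_nonneg i hρ.1)
    (fun i => hM.re_trace_mul_nonneg i hσ.1) (hsum hρ) (hsum hσ) hV
    (fun i => hM.re_trace_mul_le i hρ) (fun i => hM.re_trace_mul_le i hσ) hL htv hε1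
  rw [obsEntropy_eq_coarseEntropy, obsEntropy_eq_coarseEntropy, hFun_eq_binEntropy]
  linarith [key]
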